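/- arXiv:1809.00936 — 2 statements merged into one kernel-verified Lean document; each statement's English description precedes it below -/
import Mathlib

section
/- Let X = ℝ, Y = (0,2), and μ = (1/2)(δ_1 + δ_ε) for ε ∈ (0,1). Then W'_p(μ,0)^p = (1/2)(1+ε^p) and W*_p(μ)^p = ((1+ε)/2)^p; in particular, as ε → 0, the ratio W*_p(μ)/W'_p(μ,0) tends to 2^{-1+1/p}, showing the lower bound 2^{-1+1/p} W'_p(μ,0) ≤ W*_p(μ) is sharp. -/
open MeasureTheory Metric Set
open scoped ENNReal NNReal

/-- `d*(x,y) := inf_{z ∈ X \ Y} (d(x,z) + d(z,y))`. -/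
noncomputable def dstar {X : Type*} [MetricSpace X] (Y : Set X) (x y : X) : ℝ :=
  ⨅ z : (Yᶜ : Set X), (dist x (z : X) + dist (z : X) y)

/-- Couplings of two measures. -/
def Cpl {α : Type*} [MeasurableSpace α] (μ ν : Measure α) : Set (Measure (α × α)) :=
  {q | q.map Prod.fst = μ ∧ q.map Prod.snd = ν}

/-- `p`-transportation cost of a plan `q` with respect to a cost function `c`. -/
noncomputable def tcost {α : Type*} [MeasurableSpace α] (c : α → α → ℝ) (p : ℝ)
    (q : Measure (α × α)) : ℝ≥0∞ :=
  ∫⁻ z, ENNReal.ofReal (c z.1 z.2 ^ p) ∂q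

/-- The `L^p`-transportation distance `W̃_p` between charged (sub)probability measures
`σ = (σ⁺,σ⁻)` and `τ = (τ⁺,τ⁻)`: infimum over decomposed couplings `q^{++},q^{+-},q^{-+},q^{--}`
with the appropriate marginals, transporting like charges at cost `d` and opposite charges at
cost `d*`. -/
noncomputable def Wtilde {X : Type*} [MetricSpace X] [MeasurableSpace X] (Y : Set X) (p : ℝ)
    (σ τ : Measure X × Measure X) : ℝ≥0∞ :=
  (⨅ Q : {Q : Measure (X × X) × Measure (X × X) × Measure (X × X) × Measure (X × X) //
        (Q.1 + Q.2.1).map Prod.fst = σ.1 ∧ (Q.2.2.1 + Q.2.2.2).map Prod.fst = σ.2 ∧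
        (Q.1 + Q.2.2.1).map Prod.snd = τ.1 ∧ (Q.2.1 + Q.2.2.2).map Prod.snd = τ.2},
      tcost (fun x y => dist x y) p Q.1.1 + tcost (dstar Y) p Q.1.2.1 +
        tcost (dstar Y) p Q.1.2.2.1 + tcost (fun x y => dist x y) p Q.1.2.2.2) ^ (1/p)

/-- The transportation-annihilation pre-distance `W⁰_p` between subprobabilities on `Y`. -/
noncomputable def W0 {X : Type*} [MetricSpace X] [MeasurableSpace X] (Y : Set X) (p : ℝ)
    (μ ν : Measure X) : ℝ≥0∞ :=
  ⨅ re : {re : Measure X × Measure X //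
      (μ + (2 : ℝ≥0∞) • re.1) Set.univ = 1 ∧ (ν + (2 : ℝ≥0∞) • re.2) Set.univ = 1},
    Wtilde Y p (μ + re.1.1, re.1.1) (ν + re.1.2, re.1.2)

/-- `W'_p(μ,0)^p = ∫ d'(x,∂)^p dμ`: the `p`-th power of the cost of annihilating `μ`
at the boundary via the shortcut metric. -/
noncomputable def WprimeZeroPow {X : Type*} [MetricSpace X] [MeasurableSpace X]
    (Y : Set X) (p : ℝ) (μ : Measure X) : ℝ≥0∞ :=
  ∫⁻ x, ENNReal.ofReal (infDist x Yᶜ ^ p) ∂μ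

/-- `W_p(μ,ν)^p`: the `p`-th power of the Kantorovich-Wasserstein distance. -/
noncomputable def WpPow {X : Type*} [MetricSpace X] [MeasurableSpace X] (p : ℝ)
    (μ ν : Measure X) : ℝ≥0∞ :=
  ⨅ q : Cpl μ ν, tcost (fun a b => dist a b) p q.1

/-- `W*_p(μ,ν)^p`: the `p`-th power of the transportation cost w.r.t. the meta-metric `d*`. -/
noncomputable def WstarPow {X : Type*} [MetricSpace X] [MeasurableSpace X] (Y : Set X) (p : ℝ)
    (μ ν : Measure X) : ℝ≥0∞ :=
  ⨅ q : Cpl μ ν, tcost (dstar Y) p q.1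

/-- The annihilation cost `W*_p(μ) := (1/2) W*_p(μ,μ)`. -/
noncomputable def Wstar {X : Type*} [MetricSpace X] [MeasurableSpace X] (Y : Set X) (p : ℝ)
    (μ : Measure X) : ℝ≥0∞ :=
  2⁻¹ * (WstarPow Y p μ μ) ^ (1/p)

/-- Approximate midpoint property: a characterization of length spaces. -/
def IsLengthDist {α : Type*} (d : α → α → ℝ) : Prop :=
  ∀ x y : α, ∀ ε > (0:ℝ), ∃ z : α, d x z ≤ d x y / 2 + ε ∧ d z y ≤ d x y / 2 + ε

/-!
Since `d*(x,y) ≥ d'(x,∂) + d'(y,∂)`, Jensen's inequality bounds the `d*`-cost of every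
self-coupling of a probability measure `μ` from below by `(2 W'_1(μ,0))^p`. For
`μ = ½(δ_1 + δ_ε)` this bound is `(1+ε)^p`, and it is attained by the coupling that swaps the
two atoms, each travelling through the boundary point `0`. On the other hand
`W'_p(μ,0)^p = ½(1+ε^p) → ½` as `ε → 0`.
-/

section Dstar

variable {X : Type*} [MetricSpace X] {Y : Set X}

lemma dstar_comm (x y : X) : dstar Y x y = dstar Y y x := by
  simp only [dstar, dist_comm x, dist_comm y, add_comm]

lemma dstar_le_dist_add_dist {z : X} (hz : z ∉ Y) (x y : X) :
    dstar Y x y ≤ dist x z + dist z y :=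
  ciInf_le ⟨0, by rintro _ ⟨w, rfl⟩; positivity⟩ (⟨z, hz⟩ : (Yᶜ : Set X))

lemma infDist_add_infDist_le_dstar (x y : X) :
    infDist x Yᶜ + infDist y Yᶜ ≤ dstar Y x y := by
  rcases isEmpty_or_nonempty (Yᶜ : Set X) with hY | hY
  · simp [dstar, Set.isEmpty_coe_sort.mp hY]
  · exact le_ciInf fun z => add_le_add (infDist_le_dist_of_mem z.2)
      (dist_comm (z : X) y ▸ infDist_le_dist_of_mem z.2)

lemma dstar_nonneg {x y : X} : 0 ≤ dstar Y x y :=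
  (add_nonneg infDist_nonneg infDist_nonneg).trans (infDist_add_infDist_le_dstar x y)

end Dstar

lemma infDist_compl_Ioo {a b x : ℝ} (hx : x ∈ Icc a b) :
    infDist x (Ioo a b)ᶜ = min (x - a) (b - x) := by
  obtain ⟨hxa, hxb⟩ := hx
  have ha : a ∈ (Ioo a b)ᶜ := by simp
  refine le_antisymm (le_min ?_ ?_) ((le_infDist ⟨a, ha⟩).2 fun y hy => ?_)
  · simpa [Real.dist_eq, abs_of_nonneg (sub_nonneg.2 hxa)] using
      infDist_le_dist_of_mem (x := x) ha
  · simpa [Real.dist_eq, abs_of_nonpos (sub_nonpos.2 hxb)] using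
      infDist_le_dist_of_mem (x := x) (show b ∈ (Ioo a b)ᶜ by simp)
  · simp only [mem_compl_iff, mem_Ioo, not_and, not_lt] at hy
    rw [Real.dist_eq]
    rcases le_or_gt y a with hya | hya
    · exact (min_le_left _ _).trans (by rw [abs_of_nonneg (by linarith)]; linarith)
    · have hyb := hy hya
      exact (min_le_right _ _).trans (by rw [abs_of_nonpos (by linarith)]; linarith)

section Coupling

variable {α : Type*} [MeasurableSpace α]

lemma lintegral_half_dirac_add [MeasurableSingletonClass α] (f : α → ℝ≥0∞) (a b : α) :
    ∫⁻ x, f x ∂((2:ℝ≥0∞)⁻¹ • (Measure.dirac a + Measure.dirac b)) = 2⁻¹ * (f a + f b) := by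
  rw [lintegral_smul_measure, lintegral_add_measure, lintegral_dirac, lintegral_dirac,
    smul_eq_mul]

instance isProbabilityMeasure_half_dirac_add (a b : α) :
    IsProbabilityMeasure ((2:ℝ≥0∞)⁻¹ • (Measure.dirac a + Measure.dirac b)) :=
  ⟨by rw [Measure.smul_apply, Measure.add_apply, measure_univ, measure_univ, smul_eq_mul,
    one_add_one_eq_two, ENNReal.inv_mul_cancel two_ne_zero ENNReal.ofNat_ne_top]⟩

lemma swap_mem_Cpl (a b : α) :
    (2:ℝ≥0∞)⁻¹ • (Measure.dirac (a, b) + Measure.dirac (b, a)) ∈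
      Cpl ((2:ℝ≥0∞)⁻¹ • (Measure.dirac a + Measure.dirac b))
        ((2:ℝ≥0∞)⁻¹ • (Measure.dirac a + Measure.dirac b)) := by
  constructor
  · rw [Measure.map_smul, Measure.map_add _ _ measurable_fst,
      Measure.map_dirac' measurable_fst, Measure.map_dirac' measurable_fst]
  · rw [Measure.map_smul, Measure.map_add _ _ measurable_snd,
      Measure.map_dirac' measurable_snd, Measure.map_dirac' measurable_snd, add_comm]

lemma rpow_lintegral_le_lintegral_rpow {μ : Measure α} [IsProbabilityMeasure μ]
    {f : α → ℝ≥0∞} (hf : AEMeasurable f μ) {p : ℝ} (hp : 1 ≤ p) :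
    (∫⁻ x, f x ∂μ) ^ p ≤ ∫⁻ x, f x ^ p ∂μ := by
  have h := eLpNorm'_le_eLpNorm'_of_exponent_le one_pos hp μ hf.aestronglyMeasurable
  simp only [eLpNorm', enorm_eq_self, ENNReal.rpow_one, div_one] at h
  rwa [one_div, ENNReal.le_rpow_inv_iff (by linarith)] at h

end Coupling

section Annihilation

variable {X : Type*} [MetricSpace X] [MeasurableSpace X]

theorem two_mul_WprimeZeroPow_one_rpow_le_WstarPow [OpensMeasurableSpace X] (Y : Set X)
    (μ : Measure X) [IsProbabilityMeasure μ] {p : ℝ} (hp : 1 ≤ p) :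
    (2 * WprimeZeroPow Y 1 μ) ^ p ≤ WstarPow Y p μ μ := by
  refine le_iInf fun ⟨q, hq₁, hq₂⟩ => ?_
  have : IsProbabilityMeasure q := by
    rw [← Measure.isProbabilityMeasure_map_iff measurable_fst.aemeasurable, hq₁]
    infer_instance
  set s : X → ℝ≥0∞ := fun x => ENNReal.ofReal (infDist x Yᶜ)
  have hs : Measurable s := ENNReal.measurable_ofReal.comp (continuous_infDist_pt _).measurable
  have hmarg : ∫⁻ z, s z.1 + s z.2 ∂q = 2 * WprimeZeroPow Y 1 μ := by
    rw [lintegral_add_left (f := fun z : X × X => s z.1) (hs.comp measurable_fst),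
      ← lintegral_map hs measurable_fst, ← lintegral_map hs measurable_snd, hq₁, hq₂, two_mul]
    simp [WprimeZeroPow, s]
  calc (2 * WprimeZeroPow Y 1 μ) ^ p = (∫⁻ z, s z.1 + s z.2 ∂q) ^ p := by rw [hmarg]
    _ ≤ ∫⁻ z, (s z.1 + s z.2) ^ p ∂q := rpow_lintegral_le_lintegral_rpow (by fun_prop) hp
    _ ≤ tcost (dstar Y) p q := lintegral_mono fun z => ?_
  have hs₀ : 0 ≤ infDist z.1 Yᶜ + infDist z.2 Yᶜ := add_nonneg infDist_nonneg infDist_nonneg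
  rw [← ENNReal.ofReal_add infDist_nonneg infDist_nonneg,
    ENNReal.ofReal_rpow_of_nonneg hs₀ (by linarith)]
  exact ENNReal.ofReal_le_ofReal
    (Real.rpow_le_rpow hs₀ (infDist_add_infDist_le_dstar _ _) (by linarith))

lemma WstarPow_half_dirac_add_le [MeasurableSingletonClass X] (Y : Set X) (p : ℝ) (a b : X) :
    WstarPow Y p ((2:ℝ≥0∞)⁻¹ • (Measure.dirac a + Measure.dirac b))
        ((2:ℝ≥0∞)⁻¹ • (Measure.dirac a + Measure.dirac b)) ≤
      ENNReal.ofReal (dstar Y a b ^ p) := by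
  refine (iInf_le _ ⟨_, swap_mem_Cpl a b⟩).trans_eq ?_
  rw [tcost, lintegral_half_dirac_add, dstar_comm b a, ← two_mul, ← mul_assoc,
    ENNReal.inv_mul_cancel two_ne_zero ENNReal.ofNat_ne_top, one_mul]

end Annihilation

section Example

variable {ε : ℝ}

lemma infDist_compl_Ioo_zero_two {x : ℝ} (hx₀ : 0 ≤ x) (hx₁ : x ≤ 1) :
    infDist x (Ioo (0:ℝ) 2)ᶜ = x := by
  rw [infDist_compl_Ioo ⟨hx₀, by linarith⟩, min_eq_left (by linarith), sub_zero]

lemma WprimeZeroPow_example (p : ℝ) (hε : ε ∈ Ioo (0:ℝ) 1) :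
    WprimeZeroPow (Ioo (0:ℝ) 2) p ((2:ℝ≥0∞)⁻¹ • (Measure.dirac (1:ℝ) + Measure.dirac ε)) =
      ENNReal.ofReal ((1/2) * (1 + ε ^ p)) := by
  rw [WprimeZeroPow, lintegral_half_dirac_add, infDist_compl_Ioo_zero_two zero_le_one le_rfl,
    infDist_compl_Ioo_zero_two hε.1.le hε.2.le, Real.one_rpow,
    ← ENNReal.ofReal_add zero_le_one (Real.rpow_nonneg hε.1.le p),
    ENNReal.ofReal_mul (by norm_num), one_div, ENNReal.ofReal_inv_of_pos two_pos,
    ENNReal.ofReal_ofNat]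

lemma WstarPow_example {p : ℝ} (hp : 1 ≤ p) (hε : ε ∈ Ioo (0:ℝ) 1) :
    WstarPow (Ioo (0:ℝ) 2) p ((2:ℝ≥0∞)⁻¹ • (Measure.dirac (1:ℝ) + Measure.dirac ε))
        ((2:ℝ≥0∞)⁻¹ • (Measure.dirac (1:ℝ) + Measure.dirac ε)) =
      ENNReal.ofReal ((1 + ε) ^ p) := by
  obtain ⟨hε₀, hε₁⟩ := hε
  refine le_antisymm ((WstarPow_half_dirac_add_le _ p 1 ε).trans ?_) ?_
  · have hd := dstar_le_dist_add_dist (Y := Ioo (0:ℝ) 2) (z := 0) (by simp) 1 ε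
    simp only [Real.dist_eq, sub_zero, zero_sub, abs_neg, abs_one, abs_of_pos hε₀] at hd
    exact ENNReal.ofReal_le_ofReal (Real.rpow_le_rpow dstar_nonneg hd (by linarith))
  · refine le_of_eq_of_le ?_ (two_mul_WprimeZeroPow_one_rpow_le_WstarPow _ _ hp)
    rw [WprimeZeroPow_example 1 ⟨hε₀, hε₁⟩, Real.rpow_one, ← ENNReal.ofReal_ofNat 2,
      ← ENNReal.ofReal_mul zero_le_two, ENNReal.ofReal_rpow_of_nonneg (by linarith) (by linarith)]
    congr 2
    ring

lemma Wstar_example {p : ℝ} (hp : 1 ≤ p) (hε : ε ∈ Ioo (0:ℝ) 1) :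
    Wstar (Ioo (0:ℝ) 2) p ((2:ℝ≥0∞)⁻¹ • (Measure.dirac (1:ℝ) + Measure.dirac ε)) =
      ENNReal.ofReal ((1 + ε) / 2) := by
  have hε₀ : 0 ≤ 1 + ε := by linarith [hε.1]
  rw [Wstar, WstarPow_example hp hε,
    ENNReal.ofReal_rpow_of_nonneg (by positivity) (by positivity), ← Real.rpow_mul hε₀,
    mul_one_div_cancel (by positivity), Real.rpow_one, div_eq_inv_mul,
    ENNReal.ofReal_mul (by norm_num), ENNReal.ofReal_inv_of_pos two_pos, ENNReal.ofReal_ofNat]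

end Example

open Filter Topology in
lemma tendsto_Wstar_div_WprimeZeroPow_rpow_example {p : ℝ} (hp : 1 ≤ p) :
    Tendsto
      (fun ε : ℝ =>
        Wstar (Ioo (0:ℝ) 2) p ((2:ℝ≥0∞)⁻¹ • (Measure.dirac (1:ℝ) + Measure.dirac ε)) /
          (WprimeZeroPow (Ioo (0:ℝ) 2) p
            ((2:ℝ≥0∞)⁻¹ • (Measure.dirac (1:ℝ) + Measure.dirac ε))) ^ (1/p))
      (𝓝[>] 0) (𝓝 (ENNReal.ofReal (2 ^ (-1 + 1/p : ℝ)))) := by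
  set f : ℝ → ℝ := fun ε => ((1 + ε) / 2) / ((1/2) * (1 + ε ^ p)) ^ (1/p)
  have hf : ContinuousAt f 0 := by
    fun_prop (disch := first | positivity | (left; norm_num) | (right; positivity))
  have hf₀ : f 0 = 2 ^ (-1 + 1/p : ℝ) := by
    simp only [f, Real.zero_rpow (by positivity : p ≠ 0)]
    rw [add_zero, mul_one, Real.rpow_add two_pos, Real.rpow_neg_one, one_div (2:ℝ),
      Real.inv_rpow zero_le_two, div_inv_eq_mul]
  refine (ENNReal.tendsto_ofReal (hf₀ ▸ hf.tendsto.mono_left nhdsWithin_le_nhds)).congr' ?_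
  filter_upwards [Ioo_mem_nhdsGT (zero_lt_one' ℝ)] with ε hε
  have hW' : 0 < (1/2) * (1 + ε ^ p) := by have := Real.rpow_nonneg hε.1.le p; positivity
  rw [Wstar_example hp hε, WprimeZeroPow_example p hε, ENNReal.ofReal_rpow_of_pos hW',
    ENNReal.ofReal_div_of_pos (by positivity)]

/-- in `X = ℝ`, `Y = (0,2)`, `μ = (1/2)(δ_1 + δ_ε)`, `ε ∈ (0,1)`:
`W'_p(μ,0)^p = (1/2)(1+ε^p)` and `W*_p(μ)^p = ((1+ε)/2)^p`; as `ε → 0` the ratio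
`W*_p(μ)/W'_p(μ,0)` tends to `2^{-1+1/p}`, so the lower bound is sharp. -/
theorem Wstar_lower_bound_sharp (p : ℝ) (hp : 1 ≤ p) :
    (∀ ε : ℝ, ε ∈ Set.Ioo (0:ℝ) 1 →
      WprimeZeroPow (Set.Ioo (0:ℝ) 2) p
          ((2:ℝ≥0∞)⁻¹ • (Measure.dirac (1:ℝ) + Measure.dirac ε)) =
        ENNReal.ofReal ((1/2) * (1 + ε ^ p)) ∧
      (Wstar (Set.Ioo (0:ℝ) 2) p
          ((2:ℝ≥0∞)⁻¹ • (Measure.dirac (1:ℝ) + Measure.dirac ε))) ^ p =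
        ENNReal.ofReal (((1 + ε)/2) ^ p)) ∧
    Filter.Tendsto
      (fun ε : ℝ =>
        Wstar (Set.Ioo (0:ℝ) 2) p ((2:ℝ≥0∞)⁻¹ • (Measure.dirac (1:ℝ) + Measure.dirac ε)) /
          (WprimeZeroPow (Set.Ioo (0:ℝ) 2) p
            ((2:ℝ≥0∞)⁻¹ • (Measure.dirac (1:ℝ) + Measure.dirac ε))) ^ (1/p))
      (nhdsWithin 0 (Set.Ioi 0))
      (nhds (ENNReal.ofReal (2 ^ (-1 + 1/p : ℝ)))) := by
  refine ⟨fun ε hε => ⟨WprimeZeroPow_example p hε, ?_⟩,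
    tendsto_Wstar_div_WprimeZeroPow_rpow_example hp⟩
  rw [Wstar_example hp hε, ENNReal.ofReal_rpow_of_nonneg (by linarith [hε.1]) (by linarith)]
end

section
/- Let μ, ν be subprobability measures on Y with finite first moments and μ(Y) ≥ ν(Y). Then for any z ∈ X\Y, W¹₀(μ,ν) ≤ inf { W₁(μ₁,ν) + ∫_X d(x,z) dμ₀(x) : μ = μ₁ + μ₀, μ₁(Y) = ν(Y) }, i.e. the transportation-annihilation pre-distance is bounded by transporting a part of μ of mass ν(Y) to ν and annihilating the remainder over the point z. -/
open MeasureTheory Metric Set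
open scoped ENNReal NNReal

/-!
Write `μ = μ₁ + μ₀`. Charging `μ` with `(ρ, ρ)` and `ν` with `(½μ₀ + ρ, ½μ₀ + ρ)`, where
`ρ = ½(1 - μ(X)) δ_z`, gives two charged probabilities, because `ν + μ₀` has the mass of `μ`.
A plan for `W̃₁` between them transports `μ₁` to `ν`, lets one half of `μ₀` annihilate the negative
charge `½μ₀` in place, at cost `d*(x, x) ≤ 2 d(x, z)` since `z ∉ Y`, and leaves the other half of
`μ₀` and both copies of `ρ` in place at no cost.
-/

lemma measure_univ_add_two_smul_half_deficit {X : Type*} [MeasurableSpace X] (μ δ : Measure X)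
    [IsProbabilityMeasure δ] {m : ℝ≥0∞} (hμ : μ univ = m) (hm : m ≤ 1) :
    (μ + (2 : ℝ≥0∞) • ((2⁻¹ * (1 - m)) • δ)) univ = 1 := by
  rw [Measure.add_apply, hμ, smul_smul, ← mul_assoc,
    ENNReal.mul_inv_cancel two_ne_zero ENNReal.ofNat_ne_top, one_mul, Measure.smul_apply,
    measure_univ, smul_eq_mul, mul_one, add_tsub_cancel_of_le hm]

section Plans

variable {X : Type*} [MeasurableSpace X]

noncomputable def diagPlan (ξ : Measure X) : Measure (X × X) :=
  ξ.map Function.diag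

lemma map_fst_diagPlan (ξ : Measure X) : (diagPlan ξ).map Prod.fst = ξ := by
  rw [diagPlan, Measure.map_map measurable_fst measurable_diag]
  exact Measure.map_id

lemma map_snd_diagPlan (ξ : Measure X) : (diagPlan ξ).map Prod.snd = ξ := by
  rw [diagPlan, Measure.map_map measurable_snd measurable_diag]
  exact Measure.map_id

lemma tcost_add (c : X → X → ℝ) (p : ℝ) (q₁ q₂ : Measure (X × X)) :
    tcost c p (q₁ + q₂) = tcost c p q₁ + tcost c p q₂ :=
  lintegral_add_measure _ _ _

lemma tcost_zero (c : X → X → ℝ) (p : ℝ) : tcost c p (0 : Measure (X × X)) = 0 :=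
  lintegral_zero_measure _

lemma tcost_diagPlan_le (c : X → X → ℝ) (p : ℝ) (ξ : Measure X) :
    tcost c p (diagPlan ξ) ≤ ∫⁻ x, ENNReal.ofReal (c x x ^ p) ∂ξ :=
  lintegral_map_le _ _

end Plans

section TransportAnnihilation

variable {X : Type*} [MetricSpace X]

lemma dstar_self_le {Y : Set X} {z : X} (hz : z ∈ Yᶜ) (x : X) :
    dstar Y x x ≤ 2 * dist x z := by
  have hbdd : BddBelow (Set.range fun w : (Yᶜ : Set X) => dist x w + dist (w : X) x) :=
    ⟨0, by rintro _ ⟨w, rfl⟩; positivity⟩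
  calc dstar Y x x ≤ dist x z + dist z x := ciInf_le hbdd ⟨z, hz⟩
    _ = 2 * dist x z := by rw [dist_comm z x, two_mul]

variable [MeasurableSpace X]

lemma tcost_dist_diagPlan {p : ℝ} (hp : p ≠ 0) (ξ : Measure X) :
    tcost (fun x y => dist x y) p (diagPlan ξ) = 0 :=
  le_antisymm ((tcost_diagPlan_le _ p ξ).trans (by simp [Real.zero_rpow hp])) bot_le

lemma tcost_dstar_diagPlan_half_le {Y : Set X} {z : X} (hz : z ∈ Yᶜ) (μ₀ : Measure X) :
    tcost (dstar Y) 1 (diagPlan ((2⁻¹ : ℝ≥0∞) • μ₀)) ≤ ∫⁻ x, ENNReal.ofReal (dist x z) ∂μ₀ := by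
  have hpoint (x : X) : ENNReal.ofReal (dstar Y x x ^ (1 : ℝ)) ≤ 2 * ENNReal.ofReal (dist x z) := by
    rw [Real.rpow_one, ← ENNReal.ofReal_ofNat 2, ← ENNReal.ofReal_mul zero_le_two]
    exact ENNReal.ofReal_le_ofReal (dstar_self_le hz x)
  calc tcost (dstar Y) 1 (diagPlan ((2⁻¹ : ℝ≥0∞) • μ₀))
      ≤ ∫⁻ x, 2 * ENNReal.ofReal (dist x z) ∂((2⁻¹ : ℝ≥0∞) • μ₀) :=
        (tcost_diagPlan_le _ _ _).trans (lintegral_mono hpoint)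
    _ = ∫⁻ x, ENNReal.ofReal (dist x z) ∂μ₀ := by
        rw [lintegral_smul_measure, lintegral_const_mul' _ _ ENNReal.ofNat_ne_top, smul_eq_mul,
          ← mul_assoc, ENNReal.inv_mul_cancel two_ne_zero ENNReal.ofNat_ne_top, one_mul]

/-- The decomposed plan: `q + diag(½μ₀) + diag ρ` for like charges `+ → +`, `diag(½μ₀)` for
`+ → −` (the annihilation), nothing for `− → +`, and `diag ρ` for `− → −`. -/
lemma Wtilde_one_le_tcost_add_lintegral_dist {Y : Set X} {z : X} (hz : z ∈ Yᶜ)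
    {μ₁ ν : Measure X} {q : Measure (X × X)} (hq : q ∈ Cpl μ₁ ν) (μ₀ ρ : Measure X) :
    Wtilde Y 1 (μ₁ + μ₀ + ρ, ρ) (ν + ((2⁻¹ : ℝ≥0∞) • μ₀ + ρ), (2⁻¹ : ℝ≥0∞) • μ₀ + ρ) ≤
      tcost (fun a b => dist a b) 1 q + ∫⁻ x, ENNReal.ofReal (dist x z) ∂μ₀ := by
  set ξ := (2⁻¹ : ℝ≥0∞) • μ₀
  have hξξ : ξ + ξ = μ₀ := by
    rw [← two_smul ℝ≥0∞, smul_smul, ENNReal.mul_inv_cancel two_ne_zero ENNReal.ofNat_ne_top,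
      one_smul]
  rw [Wtilde, div_one, ENNReal.rpow_one]
  refine iInf_le_of_le
    ⟨(q + diagPlan ξ + diagPlan ρ, diagPlan ξ, 0, diagPlan ρ), ?_, ?_, ?_, ?_⟩ ?_
  · simp only [Measure.map_add _ _ measurable_fst, hq.1, map_fst_diagPlan]
    rw [← hξξ]
    abel
  · simp only [zero_add, map_fst_diagPlan]
  · simp only [add_zero, Measure.map_add _ _ measurable_snd, hq.2, map_snd_diagPlan]
    abel
  · simp only [Measure.map_add _ _ measurable_snd, map_snd_diagPlan]
  · simp only [tcost_add, tcost_dist_diagPlan one_ne_zero, tcost_zero, add_zero]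
    exact add_le_add_right (tcost_dstar_diagPlan_half_le hz μ₀) _

end TransportAnnihilation

theorem W0_le_transport_annihilate_general {X : Type*} [MetricSpace X] [MeasurableSpace X]
    (Y : Set X)
    (μ ν : Measure X)
    (hμsub : μ Set.univ ≤ 1)
    (z : X) (hz : z ∈ Yᶜ) :
    W0 Y 1 μ ν ≤
      ⨅ d : {d : Measure X × Measure X // μ = d.1 + d.2 ∧ d.1 Set.univ = ν Set.univ},
        ((⨅ q : Cpl d.1.1 ν, tcost (fun a b => dist a b) 1 q.1) +
          ∫⁻ x, ENNReal.ofReal (dist x z) ∂d.1.2) := by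
  refine le_iInf ?_
  rintro ⟨⟨μ₁, μ₀⟩, rfl, hmass⟩
  rw [ENNReal.iInf_add]
  refine le_iInf ?_
  rintro ⟨q, hq⟩
  set ρ : Measure X := (2⁻¹ * (1 - (μ₁ + μ₀) univ)) • Measure.dirac z
  have hρμ : (μ₁ + μ₀ + (2 : ℝ≥0∞) • ρ) univ = 1 := measure_univ_add_two_smul_half_deficit _ _ rfl hμsub
  have hνμ₀ : (ν + μ₀) univ = (μ₁ + μ₀) univ := by simp only [Measure.add_apply, hmass]
  have hρν : (ν + (2 : ℝ≥0∞) • ((2⁻¹ : ℝ≥0∞) • μ₀ + ρ)) univ = 1 := by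
    rw [smul_add, smul_smul, ENNReal.mul_inv_cancel two_ne_zero ENNReal.ofNat_ne_top, one_smul,
      ← add_assoc]
    exact measure_univ_add_two_smul_half_deficit _ _ hνμ₀ hμsub
  rw [W0]
  exact iInf_le_of_le ⟨(ρ, (2⁻¹ : ℝ≥0∞) • μ₀ + ρ), hρμ, hρν⟩
    (Wtilde_one_le_tcost_add_lintegral_dist hz hq μ₀ ρ)

/-- for subprobabilities `μ,ν` on `Y` with finite first moments and
`μ(Y) ≥ ν(Y)`, and any `z ∈ X \ Y`:
`W⁰₁(μ,ν) ≤ inf { W₁(μ₁,ν) + ∫ d(x,z) dμ₀ : μ = μ₁ + μ₀, μ₁(Y) = ν(Y) }`. -/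
theorem W0_le_transport_annihilate {X : Type*} [MetricSpace X] [MeasurableSpace X]
    [BorelSpace X]
    (Y : Set X) (hYopen : IsOpen Y) (hYne : Y.Nonempty) (hYproper : Y ≠ Set.univ)
    (μ ν : Measure X)
    (hμsub : μ Set.univ ≤ 1) (hνsub : ν Set.univ ≤ 1)
    (hμY : μ Yᶜ = 0) (hνY : ν Yᶜ = 0)
    (hμmom : ∃ x₀ : X, (∫⁻ x, ENNReal.ofReal (dist x x₀) ∂μ) < ∞)
    (hνmom : ∃ x₀ : X, (∫⁻ x, ENNReal.ofReal (dist x x₀) ∂ν) < ∞)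
    (hmass : ν Set.univ ≤ μ Set.univ)
    (z : X) (hz : z ∈ Yᶜ) :
    W0 Y 1 μ ν ≤
      ⨅ d : {d : Measure X × Measure X // μ = d.1 + d.2 ∧ d.1 Set.univ = ν Set.univ},
        ((⨅ q : Cpl d.1.1 ν, tcost (fun a b => dist a b) 1 q.1) +
          ∫⁻ x, ENNReal.ofReal (dist x z) ∂d.1.2) :=
  W0_le_transport_annihilate_general Y μ ν hμsub z hz
end
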